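/- arXiv:1108.5448 — 3 statements merged into one kernel-verified Lean document; each statement's English description precedes it below -/
import Mathlib

section
/- Let V be a total valuation ring of a division ring K, let σ be an automorphism of K with σ(V) = V, and let T = V + K[x,σ]x be the subring of the skew polynomial ring K[x,σ] consisting of skew polynomials with constant term in V. For a two-sided ideal I of T the following are equivalent: (1) I ∩ V ≠ 0; (2) I properly contains K[x,σ]x; (3) I·K[x,σ] = K[x,σ]. Moreover, if any of these conditions holds, then I = (I ∩ V) + K[x,σ]x = (I ∩ V)·T. -/
namespace Paper

variable {Q : Type*} [Ring Q]

/-- `I` is a right `S`-submodule of `Q` (an additive subgroup closed under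
right multiplication by elements of `S`). -/
def IsRightSubmodule (S I : Set Q) : Prop :=
  (0 : Q) ∈ I ∧ (∀ x ∈ I, ∀ y ∈ I, x + y ∈ I) ∧ (∀ x ∈ I, -x ∈ I) ∧
    ∀ x ∈ I, ∀ s ∈ S, x * s ∈ I

/-- `I` is a left `S`-submodule of `Q`. -/
def IsLeftSubmodule (S I : Set Q) : Prop :=
  (0 : Q) ∈ I ∧ (∀ x ∈ I, ∀ y ∈ I, x + y ∈ I) ∧ (∀ x ∈ I, -x ∈ I) ∧
    ∀ x ∈ I, ∀ s ∈ S, s * x ∈ I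

/-- A right `S`-ideal of `Q`: a right `S`-submodule of `Q` containing a regular
element of `S` and such that `u • I ⊆ S` for some unit `u` of `Q`. -/
def IsRightIdealOfOrder (S I : Set Q) : Prop :=
  IsRightSubmodule S I ∧ (∃ a ∈ I, a ∈ S ∧ a ∈ nonZeroDivisors Q) ∧
    ∃ u : Q, IsUnit u ∧ ∀ x ∈ I, u * x ∈ S

/-- A left `S`-ideal of `Q`. -/
def IsLeftIdealOfOrder (S I : Set Q) : Prop :=
  IsLeftSubmodule S I ∧ (∃ a ∈ I, a ∈ S ∧ a ∈ nonZeroDivisors Q) ∧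
    ∃ u : Q, IsUnit u ∧ ∀ x ∈ I, x * u ∈ S

/-- `(A : B)_r = {q ∈ Q : q B ⊆ A}`. -/
def colonR (A B : Set Q) : Set Q := {q | ∀ b ∈ B, q * b ∈ A}

/-- `(A : B)_l = {q ∈ Q : B q ⊆ A}`. -/
def colonL (A B : Set Q) : Set Q := {q | ∀ b ∈ B, b * q ∈ A}

/-- The `ν`-operation on right `S`-ideals: `I_ν = (S : (S : I)_l)_r`. -/
def nuR (S I : Set Q) : Set Q := colonR S (colonL S I)

/-- The `ν`-operation on left `S`-ideals: `_νJ = (S : (S : J)_r)_l`. -/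
def nuL (S J : Set Q) : Set Q := colonL S (colonR S J)

/-- The right `S`-module generated by `a 0, …, a (n-1)`. -/
def rightSpan (S : Set Q) {n : ℕ} (a : Fin n → Q) : Set Q :=
  {q | ∃ s : Fin n → Q, (∀ i, s i ∈ S) ∧ q = ∑ i, a i * s i}

/-- `F` is finitely generated as a right `S`-module. -/
def IsFGRight (S F : Set Q) : Prop := ∃ (n : ℕ) (a : Fin n → Q), F = rightSpan S a

/-- The left `S`-module generated by `a 0, …, a (n-1)`. -/
def leftSpan (S : Set Q) {n : ℕ} (a : Fin n → Q) : Set Q :=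
  {q | ∃ s : Fin n → Q, (∀ i, s i ∈ S) ∧ q = ∑ i, s i * a i}

/-- `F` is finitely generated as a left `S`-module. -/
def IsFGLeft (S F : Set Q) : Prop := ∃ (n : ℕ) (a : Fin n → Q), F = leftSpan S a

/-- The `τ`-operation (the finite-type operation associated to `ν`):
`I^τ` is the union of `F_ν` over all finitely generated right `S`-ideals `F ⊆ I`. -/
def tauR (S I : Set Q) : Set Q :=
  {q | ∃ F : Set Q, IsRightIdealOfOrder S F ∧ IsFGRight S F ∧ F ⊆ I ∧ q ∈ nuR S F}

/-- The left-handed `τ`-operation. -/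
def tauL (S I : Set Q) : Set Q :=
  {q | ∃ F : Set Q, IsLeftIdealOfOrder S F ∧ IsFGLeft S F ∧ F ⊆ I ∧ q ∈ nuL S F}

/-- `S` is an order in `Q`: a subring such that every regular element of `S` is a unit
of `Q` and every element of `Q` is both a right fraction and a left fraction over `S`
(by Goldie's theorem, for `Q` simple Artinian this says exactly that `S` is a prime
Goldie ring with classical quotient ring `Q`). -/
def IsOrderIn (S : Set Q) : Prop :=
  (∃ R : Subring Q, (R : Set Q) = S) ∧
  (∀ s ∈ S, s ∈ nonZeroDivisors Q → IsUnit s) ∧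
  (∀ q : Q, ∃ a ∈ S, ∃ s ∈ S, IsUnit s ∧ q * s = a) ∧
  (∀ q : Q, ∃ b ∈ S, ∃ t ∈ S, IsUnit t ∧ t * q = b)

/-- The principal right `S`-module `qS`. -/
def principalRight (S : Set Q) (q : Q) : Set Q := {x | ∃ s ∈ S, x = q * s}

/-- The principal left `S`-module `Sq`. -/
def principalLeft (S : Set Q) (q : Q) : Set Q := {x | ∃ s ∈ S, x = s * q}

/-- `S` is a right `ν`-Bezout order: `I_ν` is right principal for every finitely
generated integral right `S`-ideal `I`. -/
def IsRightNuBezout (S : Set Q) : Prop :=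
  ∀ I : Set Q, IsRightIdealOfOrder S I → IsFGRight S I → I ⊆ S →
    ∃ q : Q, nuR S I = principalRight S q

/-- `S` is a left `ν`-Bezout order. -/
def IsLeftNuBezout (S : Set Q) : Prop :=
  ∀ I : Set Q, IsLeftIdealOfOrder S I → IsFGLeft S I → I ⊆ S →
    ∃ q : Q, nuL S I = principalLeft S q

/-- A `ν`-Bezout order: an order which is right and left `ν`-Bezout. -/
def IsNuBezoutOrder (S : Set Q) : Prop := IsOrderIn S ∧ IsRightNuBezout S ∧ IsLeftNuBezout S

/-- `S` is a right Bezout order: every finitely generated right ideal of `S`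
is principal. -/
def IsRightBezout (S : Set Q) : Prop :=
  ∀ I : Set Q, I ⊆ S → IsRightSubmodule S I → IsFGRight S I →
    ∃ q : Q, I = principalRight S q

/-- `S` is a left Bezout order. -/
def IsLeftBezout (S : Set Q) : Prop :=
  ∀ I : Set Q, I ⊆ S → IsLeftSubmodule S I → IsFGLeft S I →
    ∃ q : Q, I = principalLeft S q

/-- A Bezout order: an order which is right and left Bezout. -/
def IsBezoutOrder (S : Set Q) : Prop := IsOrderIn S ∧ IsRightBezout S ∧ IsLeftBezout S

/-- `b` is a right-divisor of `a` (in `S`): `a = b * s` for some `s ∈ S`. -/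
def IsRightDivisor (S : Set Q) (b a : Q) : Prop := ∃ s ∈ S, a = b * s

/-- `b` is a left-divisor of `a` (in `S`): `a = s * b` for some `s ∈ S`. -/
def IsLeftDivisor (S : Set Q) (b a : Q) : Prop := ∃ s ∈ S, a = s * b

/-- `d` is a left greatest common divisor of `a` and `b`. -/
def IsLGCD (S : Set Q) (a b d : Q) : Prop :=
  IsLeftDivisor S d a ∧ IsLeftDivisor S d b ∧
    ∀ c : Q, IsLeftDivisor S c a → IsLeftDivisor S c b → IsLeftDivisor S c d

/-- `d` is a right greatest common divisor of `a` and `b`. -/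
def IsRGCD (S : Set Q) (a b d : Q) : Prop :=
  IsRightDivisor S d a ∧ IsRightDivisor S d b ∧
    ∀ c : Q, IsRightDivisor S c a → IsRightDivisor S c b → IsRightDivisor S c d

/-- `P` is a two-sided ideal of (the ring) `S`. -/
def IsTwoSidedIdealOf (S P : Set Q) : Prop :=
  P ⊆ S ∧ (0 : Q) ∈ P ∧ (∀ x ∈ P, ∀ y ∈ P, x + y ∈ P) ∧ (∀ x ∈ P, -x ∈ P) ∧
    ∀ x ∈ P, ∀ s ∈ S, x * s ∈ P ∧ s * x ∈ P

/-- `P` is a completely prime (proper, two-sided) ideal of `S`. -/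
def IsCompletelyPrimeIdealOf (S P : Set Q) : Prop :=
  IsTwoSidedIdealOf S P ∧ (1 : Q) ∉ P ∧ ∀ a ∈ S, ∀ b ∈ S, a * b ∈ P → a ∈ P ∨ b ∈ P

/-- `P` is a left PF-prime ideal: every `l`-gcd of two nonzero elements of `P`
lies in `P`. -/
def IsLeftPFPrime (S P : Set Q) : Prop :=
  ∀ a ∈ P, ∀ b ∈ P, a ≠ 0 → b ≠ 0 → ∀ d : Q, IsLGCD S a b d → d ∈ P

/-- `S` is localizable at `P`: `S ∖ P` is a left and right Ore set consisting of
regular elements. -/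
def IsLocalizableAt (S P : Set Q) : Prop :=
  (∀ s ∈ S, s ∉ P → s ∈ nonZeroDivisors Q) ∧
  (∀ a ∈ S, ∀ s ∈ S, s ∉ P → ∃ b ∈ S, ∃ t ∈ S, t ∉ P ∧ a * t = s * b) ∧
  (∀ a ∈ S, ∀ s ∈ S, s ∉ P → ∃ b ∈ S, ∃ t ∈ S, t ∉ P ∧ t * a = b * s)

/-- The localization `S_P = {t s⁻¹ : t ∈ S, s ∈ S ∖ P}`, described as the set of
`x` with `x * s ∈ S` for some `s ∈ S ∖ P` witnessing `x * s = t`. -/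
def localizationAt (S P : Set Q) : Set Q :=
  {x | ∃ t ∈ S, ∃ s ∈ S, s ∉ P ∧ x * s = t}

/-- Finite sums of products `a * b` with `a ∈ A`, `b ∈ B` (the product of the
additive subgroups `A` and `B`). -/
def setMul (A B : Set Q) : Set Q :=
  {q | ∃ (n : ℕ) (x y : Fin n → Q), (∀ i, x i ∈ A ∧ y i ∈ B) ∧ q = ∑ i, x i * y i}

/-- The sum `Σ_α F_α` of a family of subsets of `Q` (finite sums of elements of
the members of the family). -/
def famSum {ι : Sort*} (F : ι → Set Q) : Set Q :=
  {q | ∃ (n : ℕ) (g : Fin n → Q), (∀ i, ∃ α, g i ∈ F α) ∧ q = ∑ i, g i}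

/-- `O_l(I) = {q ∈ Q : q I ⊆ I}`. -/
def Ol (I : Set Q) : Set Q := {q | ∀ x ∈ I, q * x ∈ I}

/-- `O_r(I) = {q ∈ Q : I q ⊆ I}`. -/
def Or' (I : Set Q) : Set Q := {q | ∀ x ∈ I, x * q ∈ I}

/-- A star operation on the order `S`: a map on right `S`-ideals (extended
arbitrarily to all subsets) satisfying `S* = S`, `(uI)* = u I*`, monotonicity,
extensivity and idempotence. -/
structure IsStarOp (S : Set Q) (star : Set Q → Set Q) : Prop where
  mapsTo : ∀ I : Set Q, IsRightIdealOfOrder S I → IsRightIdealOfOrder S (star I)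
  star_self : star S = S
  smul_star : ∀ u : Q, IsUnit u → ∀ I : Set Q, IsRightIdealOfOrder S I →
    star {x | ∃ y ∈ I, x = u * y} = {x | ∃ y ∈ star I, x = u * y}
  mono : ∀ I J : Set Q, IsRightIdealOfOrder S I → IsRightIdealOfOrder S J →
    I ⊆ J → star I ⊆ star J
  subset_star : ∀ I : Set Q, IsRightIdealOfOrder S I → I ⊆ star I
  idem : ∀ I : Set Q, IsRightIdealOfOrder S I → star (star I) = star I

/-- A semistar operation on the order `S`: a map on nonzero right `S`-submodules
of `Q` (extended arbitrarily to all subsets) satisfying `(uI)* = u I*`,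
monotonicity, extensivity and idempotence. -/
structure IsSemistarOp (S : Set Q) (star : Set Q → Set Q) : Prop where
  mapsTo : ∀ I : Set Q, IsRightSubmodule S I → I ≠ {0} →
    IsRightSubmodule S (star I) ∧ star I ≠ {0}
  smul_star : ∀ u : Q, IsUnit u → ∀ I : Set Q, IsRightSubmodule S I → I ≠ {0} →
    star {x | ∃ y ∈ I, x = u * y} = {x | ∃ y ∈ star I, x = u * y}
  mono : ∀ I J : Set Q, IsRightSubmodule S I → I ≠ {0} → IsRightSubmodule S J →
    J ≠ {0} → I ⊆ J → star I ⊆ star J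
  subset_star : ∀ I : Set Q, IsRightSubmodule S I → I ≠ {0} → I ⊆ star I
  idem : ∀ I : Set Q, IsRightSubmodule S I → I ≠ {0} → star (star I) = star I

/-- Ascending chain condition on the collection of sets satisfying `P`. -/
def ACCOn {α : Type*} (P : Set α → Prop) : Prop :=
  ∀ f : ℕ → Set α, (∀ n, P (f n)) → (∀ n, f n ⊆ f (n + 1)) →
    ∃ N : ℕ, ∀ n : ℕ, N ≤ n → f n = f N

/-- `S` is a right Prüfer order: `(S : I)_l I = S` and `I (S : I)_l = O_l(I)` for
every finitely generated right `S`-ideal `I`. -/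
def IsRightPruferOrder (S : Set Q) : Prop :=
  ∀ I : Set Q, IsRightIdealOfOrder S I → IsFGRight S I →
    setMul (colonL S I) I = S ∧ setMul I (colonL S I) = Ol I

/-- `S` is a left Prüfer order. -/
def IsLeftPruferOrder (S : Set Q) : Prop :=
  ∀ J : Set Q, IsLeftIdealOfOrder S J → IsFGLeft S J →
    setMul J (colonR S J) = S ∧ setMul (colonR S J) J = Or' J

/-- A Prüfer order: right and left Prüfer. -/
def IsPruferOrder (S : Set Q) : Prop := IsRightPruferOrder S ∧ IsLeftPruferOrder S

/-- `I ∈ H_r(S)`: `I` is a right `ν`-ideal of finite type, i.e. `I = J_ν` for some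
finitely generated right `S`-ideal `J`. -/
def HrMem (S I : Set Q) : Prop :=
  IsRightIdealOfOrder S I ∧
    ∃ J : Set Q, IsRightIdealOfOrder S J ∧ IsFGRight S J ∧ I = nuR S J

/-- `S` is a right Prüfer `ν`-multiplication order:
`((S:I)_l I)^τ = S` and `(I (S:I)_l)^τ = O_l(I)` for every `I ∈ H_r(S)`. -/
def IsRightPruferNuMultOrder (S : Set Q) : Prop :=
  ∀ I : Set Q, HrMem S I →
    tauR S (setMul (colonL S I) I) = S ∧ tauR S (setMul I (colonL S I)) = Ol I

/-- The Jacobson radical of the subring `R` of `Q`, viewed as a subset of `Q`: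
the set of `x ∈ R` such that `1 - y * x` is invertible in `R` for all `y ∈ R`. -/
def jacobsonSet (R : Subring Q) : Set Q :=
  {x | x ∈ R ∧ ∀ y ∈ R, ∃ z ∈ R, z * (1 - y * x) = 1 ∧ (1 - y * x) * z = 1}

/-- `R` is a Dubrovin valuation ring of `Q`: `R/J(R)` is a simple Artinian ring and
for every `q ∈ Q ∖ R` there are `r, r' ∈ R` with `r * q ∈ R ∖ J(R)` and
`q * r' ∈ R ∖ J(R)`. -/
def IsDubrovinValuationRing (R : Subring Q) : Prop :=
  (∀ c : RingCon R, (∀ x y : R, c x y ↔ ((x : Q) - y) ∈ jacobsonSet R) →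
      IsSimpleRing c.Quotient ∧ IsArtinianRing c.Quotient) ∧
  (∀ q : Q, q ∉ R →
    (∃ r ∈ R, r * q ∈ R ∧ r * q ∉ jacobsonSet R) ∧
    (∃ r' ∈ R, q * r' ∈ R ∧ q * r' ∉ jacobsonSet R))

/-- A discrete Dubrovin valuation ring: a non-Artinian Dubrovin valuation ring of `Q`
which is maximal among the Dubrovin valuation rings of `Q` different from `Q`, and
with `J(S) ≠ J(S)²`. -/
def IsDiscreteDubrovin (S : Subring Q) : Prop :=
  IsDubrovinValuationRing S ∧ ¬ IsArtinianRing S ∧ S ≠ ⊤ ∧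
    (∀ R : Subring Q, IsDubrovinValuationRing R → R ≠ ⊤ → S ≤ R → R = S) ∧
    jacobsonSet S ≠ setMul (jacobsonSet S) (jacobsonSet S)

/-- `M` is a maximal (two-sided) ideal of `S`. -/
def IsMaximalIdealOf (S M : Set Q) : Prop :=
  IsTwoSidedIdealOf S M ∧ M ≠ S ∧
    ∀ N : Set Q, IsTwoSidedIdealOf S N → M ⊆ N → N = M ∨ N = S

/-- The elements of `S` regular modulo `M`. -/
def regModulo (S M : Set Q) : Set Q :=
  {s | s ∈ S ∧ ∀ a ∈ S, (s * a ∈ M → a ∈ M) ∧ (a * s ∈ M → a ∈ M)}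

/-- The localization of `S` at the maximal ideal `M`: the ring of quotients of `S`
with respect to the Ore set of elements of `S` regular modulo `M`. -/
def localizationAtMax (S M : Set Q) : Set Q :=
  {q | ∃ a ∈ S, ∃ s ∈ regModulo S M, q * s = a}

end Paper

section SkewPoly

/-- The skew polynomial ring `K[x,σ]` (Ore extension of the division ring `K` by the
automorphism `σ`), presented axiomatically: a ring `A` together with an embedding
`ι : K →+* A`, an element `X` with `X * ι a = ι (σ a) * X`, such that every element
of `A` is uniquely of the form `Σ ι (c i) * X ^ i` (with `coeff` producing the
coefficients). -/
structure SkewPolyRing (K : Type*) [DivisionRing K] (σ : K ≃+* K)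
    (A : Type*) [Ring A] where
  ι : K →+* A
  X : A
  coeff : A → (ℕ →₀ K)
  X_mul : ∀ a : K, X * ι a = ι (σ a) * X
  sum_coeff : ∀ f : A, ((coeff f).sum fun i a => ι a * X ^ i) = f
  coeff_sum : ∀ c : ℕ →₀ K, coeff (c.sum fun i a => ι a * X ^ i) = c

end SkewPoly

/-!
The constant term is a ring homomorphism `π : K[x,σ] → K`, split by `K ⊆ K[x,σ]`, with
`T = π⁻¹(V)` and kernel `K[x,σ]x`. If `0 ≠ a ∈ I ∩ V`, then `a⁻¹ K[x,σ]x ⊆ T`, so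
`K[x,σ]x = a · a⁻¹ K[x,σ]x ⊆ I`; once `K[x,σ]x ⊆ I`, every `f ∈ I` splits as
`π f + (f - π f)` with both summands in `I`, and `f = π f · 1 + a · a⁻¹(f - π f)` exhibits
`f ∈ (I ∩ V) T`. If `1 = Σ xᵢ yᵢ` with `xᵢ ∈ I`, then `f = Σ xᵢ (yᵢ f)` puts `K[x,σ]x` inside
`I`, and `I ⊄ K[x,σ]x` since otherwise `π 1 = 0`.
-/

namespace SkewPolyRing

variable {K A : Type*} [DivisionRing K] [Ring A] {σ : K ≃+* K} (P : SkewPolyRing K σ A)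

noncomputable def sumEquiv : (ℕ →₀ K) ≃+ A where
  toFun c := c.sum fun i a => P.ι a * P.X ^ i
  invFun := P.coeff
  left_inv := P.coeff_sum
  right_inv := P.sum_coeff
  map_add' _ _ := Finsupp.sum_add_index' (by simp) (by simp [add_mul])

lemma coeff_monomial (a : K) (i : ℕ) : P.coeff (P.ι a * P.X ^ i) = Finsupp.single i a := by
  simpa using P.coeff_sum (Finsupp.single i a)

lemma addHom_ext {M : Type*} [AddCommMonoid M] {φ ψ : A →+ M}
    (h : ∀ (i : ℕ) (a : K), φ (P.ι a * P.X ^ i) = ψ (P.ι a * P.X ^ i)) : φ = ψ := by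
  have : φ.comp P.sumEquiv.toAddMonoidHom = ψ.comp P.sumEquiv.toAddMonoidHom :=
    Finsupp.addHom_ext fun i a => by simpa [sumEquiv] using h i a
  ext f
  simpa using DFunLike.congr_fun this (P.sumEquiv.symm f)

noncomputable def constCoeffAddHom : A →+ K :=
  (Finsupp.applyAddHom 0).comp P.sumEquiv.symm.toAddMonoidHom

lemma constCoeffAddHom_apply (f : A) : P.constCoeffAddHom f = P.coeff f 0 := rfl

lemma constCoeffAddHom_monomial (a : K) (i : ℕ) :
    P.constCoeffAddHom (P.ι a * P.X ^ i) = if i = 0 then a else 0 := by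
  rw [constCoeffAddHom_apply, coeff_monomial, Finsupp.single_apply, eq_comm]

lemma constCoeffAddHom_ι (a : K) : P.constCoeffAddHom (P.ι a) = a := by
  simpa using P.constCoeffAddHom_monomial a 0

lemma constCoeffAddHom_X_mul (f : A) : P.constCoeffAddHom (P.X * f) = 0 := by
  have : P.constCoeffAddHom.comp (AddMonoidHom.mulLeft P.X) = 0 := by
    refine P.addHom_ext fun i a => ?_
    rw [AddMonoidHom.comp_apply, AddMonoidHom.coe_mulLeft, AddMonoidHom.zero_apply,
      ← mul_assoc, P.X_mul, mul_assoc, ← pow_succ', constCoeffAddHom_monomial,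
      if_neg i.succ_ne_zero]
  exact DFunLike.congr_fun this f

lemma constCoeffAddHom_ι_mul (c : K) (f : A) :
    P.constCoeffAddHom (P.ι c * f) = c * P.constCoeffAddHom f := by
  have : P.constCoeffAddHom.comp (AddMonoidHom.mulLeft (P.ι c)) =
      (AddMonoidHom.mulLeft c).comp P.constCoeffAddHom := by
    refine P.addHom_ext fun i a => ?_
    simp [← mul_assoc, ← map_mul, constCoeffAddHom_monomial]
  exact DFunLike.congr_fun this f

lemma constCoeffAddHom_mul (f g : A) :
    P.constCoeffAddHom (f * g) = P.constCoeffAddHom f * P.constCoeffAddHom g := by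
  have : P.constCoeffAddHom.comp (AddMonoidHom.mulRight g) =
      (AddMonoidHom.mulRight (P.constCoeffAddHom g)).comp P.constCoeffAddHom := by
    refine P.addHom_ext fun i a => ?_
    rcases i with _ | i
    · simp [constCoeffAddHom_ι_mul, constCoeffAddHom_ι]
    · simp [pow_succ', mul_assoc, constCoeffAddHom_ι_mul, constCoeffAddHom_X_mul]
  exact DFunLike.congr_fun this f

/-- Multiplicative because `x · K[x,σ] ⊆ K[x,σ] x`. -/
noncomputable def constCoeff : A →+* K where
  __ := P.constCoeffAddHom
  map_one' := by simpa using P.constCoeffAddHom_monomial 1 0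
  map_mul' := P.constCoeffAddHom_mul

lemma constCoeff_ι : Function.LeftInverse P.constCoeff P.ι := fun a =>
  P.constCoeffAddHom_ι a

end SkewPolyRing

namespace Paper

variable {Q : Type*} [Ring Q]

lemma mul_mem_setMul {A B : Set Q} {x y : Q} (hx : x ∈ A) (hy : y ∈ B) :
    x * y ∈ setMul A B :=
  ⟨1, fun _ => x, fun _ => y, fun _ => ⟨hx, hy⟩, by simp⟩

lemma add_mul_mem_setMul {A B : Set Q} {x₁ y₁ x₂ y₂ : Q} (hx₁ : x₁ ∈ A) (hy₁ : y₁ ∈ B)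
    (hx₂ : x₂ ∈ A) (hy₂ : y₂ ∈ B) : x₁ * y₁ + x₂ * y₂ ∈ setMul A B := by
  refine ⟨2, ![x₁, x₂], ![y₁, y₂], fun i => ?_, by simp [Fin.sum_univ_two]⟩
  fin_cases i <;> simp [*]

namespace IsTwoSidedIdealOf

variable {S I : Set Q}

def toAddSubgroup (hI : IsTwoSidedIdealOf S I) : AddSubgroup Q where
  carrier := I
  zero_mem' := hI.2.1
  add_mem' hx hy := hI.2.2.1 _ hx _ hy
  neg_mem' hx := hI.2.2.2.1 _ hx

@[simp]
lemma mem_toAddSubgroup (hI : IsTwoSidedIdealOf S I) {x : Q} : x ∈ hI.toAddSubgroup ↔ x ∈ I :=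
  Iff.rfl

lemma mul_mem_right (hI : IsTwoSidedIdealOf S I) {x s : Q} (hx : x ∈ I) (hs : s ∈ S) :
    x * s ∈ I :=
  (hI.2.2.2.2 x hx s hs).1

lemma setMul_subset (hI : IsTwoSidedIdealOf S I) {J : Set Q} (hJ : J ⊆ I) :
    setMul J S ⊆ I := by
  rintro _ ⟨n, x, y, hxy, rfl⟩
  refine hI.toAddSubgroup.sum_mem fun i _ => ?_
  exact hI.mul_mem_right (hJ (hxy i).1) (hxy i).2

end IsTwoSidedIdealOf

lemma setMul_univ_eq_univ_of_mul_eq_one {I : Set Q} {u v : Q} (huv : u * v = 1) (huI : u ∈ I) :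
    setMul I Set.univ = Set.univ := by
  refine Set.eq_univ_of_forall fun q => ?_
  simpa [← mul_assoc, huv] using mul_mem_setMul huI (Set.mem_univ (v * q))

end Paper

section ConstantTerm

open Paper

variable {K A : Type*} [DivisionRing K] [Ring A] {π : A →+* K} {ι : K →+* A}
  {V : Subring K} {I : Set A}

lemma setMul_univ_subset_ker_of_subset_ker (hI : I ⊆ {f | π f = 0}) :
    setMul I Set.univ ⊆ {f | π f = 0} := by
  rintro _ ⟨n, x, y, hxy, rfl⟩
  simp [map_sum, fun i => show π (x i) = 0 from hI (hxy i).1]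

lemma ker_subset_of_ι_mem (hI : IsTwoSidedIdealOf (π ⁻¹' V) I) {a : K} (ha : a ≠ 0)
    (haI : ι a ∈ I) : {f | π f = 0} ⊆ I := by
  intro f hf
  have hmem : ι a⁻¹ * f ∈ π ⁻¹' V := by simp [show π f = 0 from hf]
  simpa [← mul_assoc, ← map_mul, ha] using hI.mul_mem_right haI hmem

lemma ι_π_mem_of_ker_subset (hπι : Function.LeftInverse π ι)
    (hI : IsTwoSidedIdealOf (π ⁻¹' V) I) (hN : {f | π f = 0} ⊆ I) {f : A} (hf : f ∈ I) :
    ι (π f) ∈ I := by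
  have hker : f - ι (π f) ∈ I := hN (by simp [hπι (π f)])
  simpa using hI.toAddSubgroup.sub_mem hf hker

lemma exists_ι_mem_iff_ker_ssubset (hπι : Function.LeftInverse π ι)
    (hI : IsTwoSidedIdealOf (π ⁻¹' V) I) :
    (∃ a : K, a ≠ 0 ∧ a ∈ V ∧ ι a ∈ I) ↔ {f | π f = 0} ⊂ I := by
  constructor
  · rintro ⟨a, ha, -, haI⟩
    exact (Set.ssubset_iff_of_subset (ker_subset_of_ι_mem hI ha haI)).2
      ⟨ι a, haI, by simpa [hπι a] using ha⟩
  · rintro ⟨hN, hIN⟩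
    obtain ⟨f, hf, hf0⟩ := Set.not_subset.1 hIN
    exact ⟨π f, hf0, hI.1 hf, ι_π_mem_of_ker_subset hπι hI hN hf⟩

lemma ker_subset_of_setMul_univ_eq_univ (hI : IsTwoSidedIdealOf (π ⁻¹' V) I)
    (h : setMul I Set.univ = Set.univ) : {f | π f = 0} ⊆ I := by
  obtain ⟨n, x, y, hxy, hone⟩ : (1 : A) ∈ setMul I Set.univ := by
    rw [h]; exact Set.mem_univ 1
  intro f hf
  have hf' : f = ∑ i, x i * (y i * f) := by
    simp only [← mul_assoc, ← Finset.sum_mul, ← hone, one_mul]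
  rw [hf']
  refine hI.toAddSubgroup.sum_mem fun i _ => ?_
  exact hI.mul_mem_right (hxy i).1 (by simp [show π f = 0 from hf])

lemma ker_ssubset_iff_setMul_univ_eq_univ (hπι : Function.LeftInverse π ι)
    (hI : IsTwoSidedIdealOf (π ⁻¹' V) I) :
    {f | π f = 0} ⊂ I ↔ setMul I Set.univ = Set.univ := by
  constructor
  · intro h
    obtain ⟨a, ha, -, haI⟩ := (exists_ι_mem_iff_ker_ssubset hπι hI).2 h
    exact setMul_univ_eq_univ_of_mul_eq_one (by simp [← map_mul, ha] : ι a * ι a⁻¹ = 1) haI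
  · intro h
    refine ⟨ker_subset_of_setMul_univ_eq_univ hI h, fun hIN => ?_⟩
    have h1 : (1 : A) ∈ setMul I Set.univ := by
      rw [h]; exact Set.mem_univ 1
    simpa using setMul_univ_subset_ker_of_subset_ker hIN h1

lemma eq_range_ι_add_ker (hπι : Function.LeftInverse π ι) (hI : IsTwoSidedIdealOf (π ⁻¹' V) I)
    (hN : {f | π f = 0} ⊆ I) :
    I = {q | ∃ g ∈ I, (∃ v ∈ V, g = ι v) ∧ ∃ h : A, π h = 0 ∧ q = g + h} := by
  ext f
  constructor
  · intro hf
    exact ⟨ι (π f), ι_π_mem_of_ker_subset hπι hI hN hf, ⟨π f, hI.1 hf, rfl⟩, f - ι (π f),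
      by simp [hπι (π f)], by abel⟩
  · rintro ⟨g, hg, -, h, hh, rfl⟩
    exact hI.toAddSubgroup.add_mem hg (hN hh)

lemma eq_setMul_inter_range (hπι : Function.LeftInverse π ι)
    (hI : IsTwoSidedIdealOf (π ⁻¹' V) I) {a : K} (ha : a ≠ 0) (haV : a ∈ V) (haI : ι a ∈ I) :
    I = setMul (I ∩ {g | ∃ v ∈ V, g = ι v}) (π ⁻¹' V) := by
  refine Set.Subset.antisymm (fun f hf => ?_) (hI.setMul_subset Set.inter_subset_left)
  have hN := ker_subset_of_ι_mem hI ha haI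
  have hdecomp : f = ι (π f) * 1 + ι a * (ι a⁻¹ * (f - ι (π f))) := by
    simp [← mul_assoc, ← map_mul, ha]
  rw [hdecomp]
  refine add_mul_mem_setMul ⟨ι_π_mem_of_ker_subset hπι hI hN hf, π f, hI.1 hf, rfl⟩ (by simp)
    ⟨haI, a, haV, rfl⟩ (by simp [hπι (π f)])

end ConstantTerm

open Paper in
theorem stmt0_general {K A : Type*} [DivisionRing K] [Ring A] (σ : K ≃+* K)
    (P : SkewPolyRing K σ A) (V : Subring K)
    (T : Set A) (hT : T = {f | P.coeff f 0 ∈ V})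
    (I : Set A) (hI : IsTwoSidedIdealOf T I) :
    ((∃ a : K, a ≠ 0 ∧ a ∈ V ∧ P.ι a ∈ I) ↔ {f | P.coeff f 0 = 0} ⊂ I) ∧
    ({f | P.coeff f 0 = 0} ⊂ I ↔ setMul I Set.univ = Set.univ) ∧
    ((∃ a : K, a ≠ 0 ∧ a ∈ V ∧ P.ι a ∈ I) →
      I = {q | ∃ g ∈ I, (∃ v ∈ V, g = P.ι v) ∧ ∃ h : A, P.coeff h 0 = 0 ∧ q = g + h} ∧
      I = setMul (I ∩ {g | ∃ v ∈ V, g = P.ι v}) T) := by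
  subst hT
  have hπι : Function.LeftInverse P.constCoeff P.ι := P.constCoeff_ι
  have hI' : IsTwoSidedIdealOf (P.constCoeff ⁻¹' V) I := hI
  refine ⟨exists_ι_mem_iff_ker_ssubset hπι hI', ker_ssubset_iff_setMul_univ_eq_univ hπι hI',
    fun ⟨a, ha, haV, haI⟩ => ⟨?_, eq_setMul_inter_range hπι hI' ha haV haI⟩⟩
  exact eq_range_ι_add_ker hπι hI' (ker_subset_of_ι_mem hI' ha haI)

open Paper in
/-- For `V` a total valuation ring of the division ring `K`, `σ` an
automorphism of `K` with `σ(V) = V`, `T = V + K[x,σ]x`, and `I` a two-sided ideal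
of `T`, the conditions (1) `I ∩ V ≠ 0`, (2) `K[x,σ]x ⊊ I`, (3) `I·K[x,σ] = K[x,σ]`
are equivalent, and if they hold then `I = (I ∩ V) + K[x,σ]x = (I ∩ V)·T`. -/
theorem stmt0 {K A : Type*} [DivisionRing K] [Ring A] (σ : K ≃+* K)
    (P : SkewPolyRing K σ A) (V : Subring K)
    (hV : ∀ x : K, x ≠ 0 → x ∈ V ∨ x⁻¹ ∈ V)
    (hσV : ∀ a : K, σ a ∈ V ↔ a ∈ V)
    (T : Set A) (hT : T = {f | P.coeff f 0 ∈ V})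
    (I : Set A) (hI : IsTwoSidedIdealOf T I) :
    ((∃ a : K, a ≠ 0 ∧ a ∈ V ∧ P.ι a ∈ I) ↔ {f | P.coeff f 0 = 0} ⊂ I) ∧
    ({f | P.coeff f 0 = 0} ⊂ I ↔ setMul I Set.univ = Set.univ) ∧
    ((∃ a : K, a ≠ 0 ∧ a ∈ V ∧ P.ι a ∈ I) →
      I = {q | ∃ g ∈ I, (∃ v ∈ V, g = P.ι v) ∧ ∃ h : A, P.coeff h 0 = 0 ∧ q = g + h} ∧
      I = setMul (I ∩ {g | ∃ v ∈ V, g = P.ι v}) T) :=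
  stmt0_general σ P V T hT I hI
end

section
/- Let S be a ν-Bezout order in a division ring D such that S is localizable at every completely prime ideal. If P is a completely prime left PF-prime ideal of S and P' is a completely prime ideal of S with P' ⊆ P, then P' is a left PF-prime ideal of S. -/
/-!
If an l-gcd `d` of `a = s d` and `b = t d` in `P'` were outside `P'`, complete primeness
would put the cofactors `s, t` in `P' ⊆ P`. Cancelling `d` in the domain `D` shows that `1`
is an l-gcd of `s` and `t`, so the PF-property of `P` forces `1 ∈ P`, which is absurd.
-/

namespace Paper

theorem isLGCD_one_of_isLGCD_mul {Q : Type*} [Ring Q] [NoZeroDivisors Q] {S : Set Q}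
    {s t d : Q} (hs : s ∈ S) (ht : t ∈ S) (hd0 : d ≠ 0)
    (hd : IsLGCD S (s * d) (t * d) d) : IsLGCD S s t 1 := by
  refine ⟨⟨s, hs, (mul_one s).symm⟩, ⟨t, ht, (mul_one t).symm⟩, ?_⟩
  rintro c ⟨u, hu, rfl⟩ ⟨v, hv, rfl⟩
  obtain ⟨r, hr, hrd⟩ := hd.2.2 (c * d) ⟨u, hu, by rw [mul_assoc]⟩ ⟨v, hv, by rw [mul_assoc]⟩
  have hcancel : 1 * d = (r * c) * d := by rw [one_mul, mul_assoc, ← hrd]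
  exact ⟨r, hr, mul_right_cancel₀ hd0 hcancel⟩

end Paper

open Paper in
theorem stmt5_general {D : Type*} [DivisionRing D] (S : Set D)
    (P : Set D) (hP : IsCompletelyPrimeIdealOf S P) (hPF : IsLeftPFPrime S P)
    (P' : Set D) (hP' : IsCompletelyPrimeIdealOf S P') (hsub : P' ⊆ P) :
    IsLeftPFPrime S P' := by
  rintro a ha b hb ha0 hb0 d hd
  have hdP : d ∈ P := hPF a (hsub ha) b (hsub hb) ha0 hb0 d hd
  have hdS : d ∈ S := hP.1.1 hdP
  obtain ⟨s, hs, rfl⟩ := hd.1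
  obtain ⟨t, ht, rfl⟩ := hd.2.1
  by_contra hdP'
  have hsP' : s ∈ P' := (hP'.2.2 s hs d hdS ha).resolve_right hdP'
  have htP' : t ∈ P' := (hP'.2.2 t ht d hdS hb).resolve_right hdP'
  have hgcd : IsLGCD S s t 1 := isLGCD_one_of_isLGCD_mul hs ht (right_ne_zero_of_mul ha0) hd
  exact hP.2.1 <| hPF s (hsub hsP') t (hsub htP') (left_ne_zero_of_mul ha0)
    (left_ne_zero_of_mul hb0) 1 hgcd

open Paper in
/-- If `S` is a ν-Bezout order in a division ring `D`, localizable at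
every completely prime ideal, then every completely prime ideal contained in a
completely prime left PF-prime ideal is again a left PF-prime ideal. -/
theorem stmt5 {D : Type*} [DivisionRing D] (S : Set D) (hS : IsNuBezoutOrder S)
    (hloc : ∀ P : Set D, IsCompletelyPrimeIdealOf S P → IsLocalizableAt S P)
    (P : Set D) (hP : IsCompletelyPrimeIdealOf S P) (hPF : IsLeftPFPrime S P)
    (P' : Set D) (hP' : IsCompletelyPrimeIdealOf S P') (hsub : P' ⊆ P) :
    IsLeftPFPrime S P' :=
  stmt5_general S P hP hPF P' hP' hsub
end

section
/- Let S be an order in a simple Artinian ring Q and let A, B be right S-ideals. Then: (1) if A^τ = B^τ then A_ν = B_ν; and (2) if A is a right ν-ideal then A is a right τ-ideal. -/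
/-!
Every `F_ν` with `F ⊆ A` lies in `A_ν`, so `A^τ ⊆ A_ν`. Conversely each `a ∈ A` lies in the
finitely generated right `S`-ideal `aS + cS ⊆ A`, where `c ∈ A ∩ S` is regular, so `A ⊆ A^τ`.
Hence `A ⊆ A^τ ⊆ A_ν`, and applying the idempotent, monotone operation `ν` gives
`(A^τ)_ν = A_ν`; both parts follow at once.
-/

namespace Paper

variable {Q : Type*} [Ring Q]

section Nu

variable (S : Set Q)

lemma subset_nuR (I : Set Q) : I ⊆ nuR S I :=
  fun x hx _ hb => hb x hx

lemma nuR_mono {I J : Set Q} (h : I ⊆ J) : nuR S I ⊆ nuR S J :=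
  fun _ hq _ hb => hq _ fun _ hf => hb _ (h hf)

lemma colonL_nuR (I : Set Q) : colonL S (nuR S I) = colonL S I :=
  Set.Subset.antisymm (fun _ hq x hx => hq x (subset_nuR S I hx)) fun _ hq _ hx => hx _ hq

lemma nuR_nuR (I : Set Q) : nuR S (nuR S I) = nuR S I :=
  congrArg (colonR S) (colonL_nuR S I)

lemma tauR_subset_nuR (A : Set Q) : tauR S A ⊆ nuR S A := by
  rintro q ⟨F, -, -, hFA, hq⟩
  exact nuR_mono S hFA hq

end Nu

lemma IsRightSubmodule.sum_mem {S I : Set Q} (hI : IsRightSubmodule S I) {n : ℕ}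
    {f : Fin n → Q} (hf : ∀ i, f i ∈ I) : ∑ i, f i ∈ I :=
  Finset.sum_induction f (· ∈ I) (fun x y hx hy => hI.2.1 x hx y hy) hI.1 fun i _ => hf i

lemma rightSpan_subset {S I : Set Q} (hI : IsRightSubmodule S I) {n : ℕ} {v : Fin n → Q}
    (hv : ∀ i, v i ∈ I) : rightSpan S v ⊆ I := by
  rintro _ ⟨s, hs, rfl⟩
  exact hI.sum_mem fun i => hI.2.2.2 _ (hv i) _ (hs i)

lemma IsRightIdealOfOrder.of_subset {S A F : Set Q} (hA : IsRightIdealOfOrder S A)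
    (hF : IsRightSubmodule S F) (hFA : F ⊆ A) (hreg : ∃ c ∈ F, c ∈ S ∧ c ∈ nonZeroDivisors Q) :
    IsRightIdealOfOrder S F := by
  obtain ⟨-, -, u, hu, huA⟩ := hA
  exact ⟨hF, hreg, u, hu, fun x hx => huA x (hFA hx)⟩

section Subring

variable (R : Subring Q)

lemma isRightSubmodule_rightSpan {n : ℕ} (v : Fin n → Q) : IsRightSubmodule R (rightSpan R v) := by
  refine ⟨⟨0, fun _ => R.zero_mem, by simp⟩, ?_, ?_, ?_⟩
  · rintro _ ⟨s, hs, rfl⟩ _ ⟨t, ht, rfl⟩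
    exact ⟨s + t, fun i => R.add_mem (hs i) (ht i), by simp [mul_add, Finset.sum_add_distrib]⟩
  · rintro _ ⟨s, hs, rfl⟩
    exact ⟨-s, fun i => R.neg_mem (hs i), by simp⟩
  · rintro _ ⟨s, hs, rfl⟩ t ht
    exact ⟨fun i => s i * t, fun i => R.mul_mem (hs i) ht, by simp [Finset.sum_mul, mul_assoc]⟩

lemma mem_rightSpan_self {n : ℕ} (v : Fin n → Q) (i : Fin n) : v i ∈ rightSpan R v := by
  refine ⟨Pi.single i 1, fun j => ?_, by simp [Pi.single_apply]⟩
  rcases eq_or_ne j i with rfl | hj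
  · simp
  · simp [hj]

lemma exists_isFGRight_subset_mem {A : Set Q} (hA : IsRightIdealOfOrder R A) {a : Q}
    (ha : a ∈ A) : ∃ F, IsRightIdealOfOrder R F ∧ IsFGRight R F ∧ F ⊆ A ∧ a ∈ F := by
  obtain ⟨c, hcA, hcR, hcreg⟩ := hA.2.1
  have hv : ∀ i, ![a, c] i ∈ A := Fin.forall_fin_two.2 ⟨ha, hcA⟩
  have hFA := rightSpan_subset hA.1 hv
  refine ⟨rightSpan R ![a, c], ?_, ⟨2, _, rfl⟩, hFA, mem_rightSpan_self R ![a, c] 0⟩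
  exact hA.of_subset (isRightSubmodule_rightSpan R _) hFA
    ⟨c, mem_rightSpan_self R ![a, c] 1, hcR, hcreg⟩

lemma subset_tauR {A : Set Q} (hA : IsRightIdealOfOrder R A) : A ⊆ tauR R A := by
  intro a ha
  obtain ⟨F, hF, hFfg, hFA, haF⟩ := exists_isFGRight_subset_mem R hA ha
  exact ⟨F, hF, hFfg, hFA, subset_nuR _ F haF⟩

lemma nuR_tauR {A : Set Q} (hA : IsRightIdealOfOrder R A) : nuR R (tauR R A) = nuR R A :=
  Set.Subset.antisymm
    ((nuR_mono _ (tauR_subset_nuR _ A)).trans (nuR_nuR _ A).subset)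
    (nuR_mono _ (subset_tauR R hA))

end Subring

end Paper

open Paper in
theorem stmt8_general {Q : Type*} [Ring Q]
    (S : Set Q) (hS : IsOrderIn S) (A B : Set Q)
    (hA : IsRightIdealOfOrder S A) (hB : IsRightIdealOfOrder S B) :
    (tauR S A = tauR S B → nuR S A = nuR S B) ∧
    (nuR S A = A → tauR S A = A) := by
  obtain ⟨⟨R, rfl⟩, -⟩ := hS
  refine ⟨fun h => ?_, fun h => ?_⟩
  · rw [← nuR_tauR R hA, ← nuR_tauR R hB, h]
  · exact Set.Subset.antisymm ((tauR_subset_nuR _ A).trans h.subset) (subset_tauR R hA)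

open Paper in
/-- For right `S`-ideals `A, B` of an order `S` in a simple Artinian
ring `Q`: (1) `A^τ = B^τ` implies `A_ν = B_ν`; (2) if `A` is a right ν-ideal then
`A` is a right τ-ideal. -/
theorem stmt8 {Q : Type*} [Ring Q] [IsSimpleRing Q] [IsArtinianRing Q]
    (S : Set Q) (hS : IsOrderIn S) (A B : Set Q)
    (hA : IsRightIdealOfOrder S A) (hB : IsRightIdealOfOrder S B) :
    (tauR S A = tauR S B → nuR S A = nuR S B) ∧
    (nuR S A = A → tauR S A = A) :=
  stmt8_general S hS A B hA hB
end
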